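/- Let T₁* = (n;1;(σ₁+τ₁)/2, 0, (σ₁+τ₁)/2) be the symmetric tridiagonal Toeplitz matrix with zero diagonal. Its eigenvalues are |σ₁+τ₁|·cos(iπ/(n+1)), i=1,...,n, and its squared Frobenius distance to the set of symmetric positive semidefinite matrices equals (1/2)‖T₁*‖_F² = ((n−1)/4)(σ₁+τ₁)². -/

import Mathlib

open Matrix Real Finset

/-- Squared Frobenius norm of a real square matrix. -/
def frobSq {n : ℕ} (A : Matrix (Fin n) (Fin n) ℝ) : ℝ := ∑ i, ∑ j, (A i j)^2

/-- A matrix is Toeplitz if its entries are constant along diagonals. -/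
def IsToeplitz {n : ℕ} (A : Matrix (Fin n) (Fin n) ℝ) : Prop :=
  ∀ i j i' j' : Fin n, (i : ℤ) - (j : ℤ) = (i' : ℤ) - (j' : ℤ) → A i j = A i' j'

/-- The (2k+1)-banded Toeplitz matrix (n;k;σ,δ,τ): subdiagonals σ₁,…,σ_k,
diagonal δ, superdiagonals τ₁,…,τ_k. -/
def bandedToeplitz (n k : ℕ) (σ τ : ℕ → ℝ) (δ : ℝ) : Matrix (Fin n) (Fin n) ℝ :=
  Matrix.of fun i j =>
    if (i : ℕ) = (j : ℕ) then δ
    else if (j : ℕ) < (i : ℕ) ∧ (i : ℕ) - (j : ℕ) ≤ k then σ ((i : ℕ) - (j : ℕ))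
    else if (i : ℕ) < (j : ℕ) ∧ (j : ℕ) - (i : ℕ) ≤ k then τ ((j : ℕ) - (i : ℕ))
    else 0

/-- The tridiagonal Toeplitz matrix (n;1;σ₁,δ,τ₁). -/
def triToeplitz (n : ℕ) (σ₁ δ τ₁ : ℝ) : Matrix (Fin n) (Fin n) ℝ :=
  bandedToeplitz n 1 (fun _ => σ₁) (fun _ => τ₁) δ


/-!
The vectors `v_j = (sin ((k + 1) θ_j))_k` with `θ_j = (j + 1)π/(n + 1)` satisfy the three-term
recurrence of `T = (n; 1; c, 0, c)` with boundary values `sin 0 = sin ((n + 1) θ_j) = 0`, so the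
`n` distinct numbers `2c cos θ_j` exhaust the spectrum of `T`. Since `θ_{n-1-j} = π - θ_j`, the
spectrum is symmetric about `0`. The squared Frobenius distance from a symmetric matrix to the
positive semidefinite cone is the sum of squares of its negative eigenvalues: conjugating by the
eigenbasis, the diagonal entries of any correction `E` must cancel the negative eigenvalues. For a
symmetric spectrum this is half of `∑ λᵢ² = ‖T‖_F²`.
-/

lemma posPart_sq_add_negPart_sq (a : ℝ) : a⁺ ^ 2 + a⁻ ^ 2 = a ^ 2 := by
  rcases le_total 0 a with ha | ha
  · rw [posPart_of_nonneg ha, negPart_of_nonneg ha]; ring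
  · rw [posPart_of_nonpos ha, negPart_of_nonpos ha]; ring

lemma negPart_sq_le_sq_of_nonneg_add {a b : ℝ} (h : 0 ≤ a + b) : a⁻ ^ 2 ≤ b ^ 2 := by
  have : a⁻ ≤ |b| := (negPart_def a).le.trans (sup_le (by linarith [le_abs_self b]) (abs_nonneg b))
  simpa only [sq_abs] using pow_le_pow_left₀ (negPart_nonneg a) this 2

lemma sum_negPart_sq_eq_half_sum_sq {ι : Type*} [Fintype ι] (f : ι → ℝ) (p : Equiv.Perm ι)
    (hp : ∀ i, f (p i) = -f i) : ∑ i, (f i)⁻ ^ 2 = 1 / 2 * ∑ i, f i ^ 2 := by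
  have hneg : ∑ i, (f i)⁻ ^ 2 = ∑ i, (f i)⁺ ^ 2 := by
    rw [← Equiv.sum_comp p]
    simp only [hp, negPart_neg]
  have hsum : ∑ i, f i ^ 2 = ∑ i, (f i)⁺ ^ 2 + ∑ i, (f i)⁻ ^ 2 := by
    rw [← Finset.sum_add_distrib]
    simp only [posPart_sq_add_negPart_sq]
  linarith

lemma Function.Injective.exists_perm_comp_eq {ι α : Type*} [Finite ι] {f g : ι → α}
    (hg : Injective g) (h : ∀ j, g j ∈ Set.range f) : ∃ e : Equiv.Perm ι, ∀ j, f (e j) = g j := by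
  choose F hF using h
  have hF_inj : Injective F := fun a b hab => hg (by rw [← hF a, ← hF b, hab])
  exact ⟨Equiv.ofBijective F hF_inj.bijective_of_finite, hF⟩

namespace Matrix

lemma IsHermitian.mem_range_eigenvalues_of_mulVec_eq {ι : Type*} [Fintype ι] [DecidableEq ι]
    {A : Matrix ι ι ℝ} (hA : A.IsHermitian) {v : ι → ℝ} (hv : v ≠ 0) {μ : ℝ}
    (h : A *ᵥ v = μ • v) : μ ∈ Set.range hA.eigenvalues := by
  rw [← hA.spectrum_real_eq_range_eigenvalues, ← spectrum_toLin']
  exact (Module.End.hasEigenvalue_of_hasEigenvector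
    ⟨Module.End.mem_eigenspace_iff.mpr (by simpa using h), hv⟩).mem_spectrum

variable {n : ℕ}

lemma frobSq_eq_trace (A : Matrix (Fin n) (Fin n) ℝ) : frobSq A = trace (Aᵀ * A) := by
  simp only [frobSq, trace, diag, mul_apply, transpose_apply, sq]
  exact Finset.sum_comm

lemma frobSq_diagonal (d : Fin n → ℝ) : frobSq (diagonal d) = ∑ i, d i ^ 2 := by
  simp [frobSq_eq_trace, trace_diagonal, sq]

lemma sum_sq_diag_le_frobSq (A : Matrix (Fin n) (Fin n) ℝ) : ∑ i, A i i ^ 2 ≤ frobSq A :=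
  Finset.sum_le_sum fun i _ =>
    Finset.single_le_sum (f := fun j => A i j ^ 2) (fun _ _ => sq_nonneg _) (Finset.mem_univ i)

lemma frobSq_unitary_conj {U : Matrix (Fin n) (Fin n) ℝ} (hU : U ∈ unitaryGroup (Fin n) ℝ)
    (A : Matrix (Fin n) (Fin n) ℝ) : frobSq (U * A * star U) = frobSq A := by
  have hUt : star U = Uᵀ := by rw [star_eq_conjTranspose, conjTranspose_eq_transpose_of_trivial]
  have hUU : Uᵀ * U = 1 := by rw [← hUt]; exact (mem_unitaryGroup_iff').mp hU
  have hconj : (U * A * Uᵀ)ᵀ * (U * A * Uᵀ) = U * (Aᵀ * (Uᵀ * U) * A) * Uᵀ := by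
    simp only [transpose_mul, transpose_transpose, Matrix.mul_assoc]
  rw [frobSq_eq_trace, frobSq_eq_trace, hUt, hconj, hUU, Matrix.mul_one, trace_mul_cycle, hUU,
    Matrix.one_mul]

theorem isLeast_frobSq_posSemidef_unitary_conj_diagonal_add {U : Matrix (Fin n) (Fin n) ℝ}
    (hU : U ∈ unitaryGroup (Fin n) ℝ) (d : Fin n → ℝ) :
    IsLeast {x : ℝ | ∃ E : Matrix (Fin n) (Fin n) ℝ,
        (U * diagonal d * star U + E).PosSemidef ∧ x = frobSq E}
      (∑ i, (d i)⁻ ^ 2) := by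
  refine ⟨⟨U * diagonal (fun i => (d i)⁻) * star U, ?_, ?_⟩, ?_⟩
  · have hsum : U * diagonal d * star U + U * diagonal (fun i => (d i)⁻) * star U =
        U * diagonal (fun i => (d i)⁺) * star U := by
      rw [← Matrix.add_mul, ← Matrix.mul_add, diagonal_add]
      congr 3
      funext i
      linarith [posPart_sub_negPart (d i)]
    rw [hsum]
    exact (posSemidef_diagonal_iff.mpr fun i => posPart_nonneg _).mul_mul_conjTranspose_same U
  · rw [frobSq_unitary_conj hU, frobSq_diagonal]
  · rintro x ⟨E, hE, rfl⟩
    set B := star U * E * U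
    have hconj : star U * (U * diagonal d * star U + E) * U = diagonal d + B := by
      have hUU : star U * U = 1 := (mem_unitaryGroup_iff').mp hU
      rw [Matrix.mul_add, Matrix.add_mul]
      congr 1
      simp only [← Matrix.mul_assoc, hUU, Matrix.one_mul]
      simp only [Matrix.mul_assoc, hUU, Matrix.mul_one]
    have hdiag : ∀ i, 0 ≤ d i + B i i := by
      intro i
      have := (hE.conjTranspose_mul_mul_same U).diag_nonneg (i := i)
      rwa [← star_eq_conjTranspose, hconj, add_apply, diagonal_apply_eq] at this
    calc ∑ i, (d i)⁻ ^ 2 ≤ ∑ i, B i i ^ 2 :=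
          Finset.sum_le_sum fun i _ => negPart_sq_le_sq_of_nonneg_add (hdiag i)
      _ ≤ frobSq B := sum_sq_diag_le_frobSq B
      _ = frobSq E := by simpa using frobSq_unitary_conj (Unitary.star_mem hU) E

variable {A : Matrix (Fin n) (Fin n) ℝ}

lemma IsHermitian.eq_conj_diagonal (hA : A.IsHermitian) :
    A = (hA.eigenvectorUnitary : Matrix (Fin n) (Fin n) ℝ) * diagonal hA.eigenvalues *
      star (hA.eigenvectorUnitary : Matrix (Fin n) (Fin n) ℝ) :=
  hA.spectral_theorem

lemma IsHermitian.frobSq_eq_sum_eigenvalues_sq (hA : A.IsHermitian) :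
    frobSq A = ∑ i, hA.eigenvalues i ^ 2 := by
  conv_lhs => rw [hA.eq_conj_diagonal]
  rw [frobSq_unitary_conj hA.eigenvectorUnitary.2, frobSq_diagonal]

theorem IsHermitian.isLeast_frobSq_posSemidef_add (hA : A.IsHermitian) :
    IsLeast {x : ℝ | ∃ E : Matrix (Fin n) (Fin n) ℝ, (A + E).PosSemidef ∧ x = frobSq E}
      (∑ i, (hA.eigenvalues i)⁻ ^ 2) := by
  have := isLeast_frobSq_posSemidef_unitary_conj_diagonal_add hA.eigenvectorUnitary.2
    hA.eigenvalues
  rwa [← hA.eq_conj_diagonal] at this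

end Matrix

namespace Fin

variable {n : ℕ}

lemma sum_ite_val_eq (f : ℕ → ℝ) (m : ℕ) :
    ∑ i : Fin n, (if (i : ℕ) = m then f i else 0) = if m < n then f m else 0 := by
  rw [sum_univ_eq_sum_range (fun i => if i = m then f i else 0), Finset.sum_ite_eq']
  simp

lemma sum_ite_succ_lt (hn : 1 ≤ n) (a : ℝ) :
    ∑ j : Fin n, (if (j : ℕ) + 1 < n then a else 0) = (n - 1) * a := by
  rw [sum_univ_eq_sum_range (fun m => if m + 1 < n then a else 0), ← Finset.sum_filter,
    show (Finset.range n).filter (fun m => m + 1 < n) = Finset.range (n - 1) by ext; simp; omega,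
    Finset.sum_const, Finset.card_range, nsmul_eq_mul, Nat.cast_sub hn, Nat.cast_one]

end Fin

section TriToeplitz

variable {n : ℕ}

lemma triToeplitz_apply (σ δ τ : ℝ) (i j : Fin n) :
    triToeplitz n σ δ τ i j =
      if (i : ℕ) = j then δ else if (i : ℕ) = j + 1 then σ else if (j : ℕ) = i + 1 then τ else 0 := by
  simp only [triToeplitz, bandedToeplitz, Matrix.of_apply]
  split_ifs <;> first | rfl | omega

lemma frobSq_triToeplitz (hn : 1 ≤ n) (σ δ τ : ℝ) :
    frobSq (triToeplitz n σ δ τ) = n * δ ^ 2 + (n - 1) * (σ ^ 2 + τ ^ 2) := by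
  have hentry : ∀ i j : Fin n, triToeplitz n σ δ τ i j ^ 2 = (if (j : ℕ) = i then δ ^ 2 else 0) +
      (if (i : ℕ) = j + 1 then σ ^ 2 else 0) + (if (j : ℕ) = i + 1 then τ ^ 2 else 0) := by
    intro i j
    rw [triToeplitz_apply]
    split_ifs <;> first | omega | ring
  have hdiag : ∑ i : Fin n, ∑ j : Fin n, (if (j : ℕ) = i then δ ^ 2 else 0) = n * δ ^ 2 := by
    simp [Fin.sum_ite_val_eq (fun _ => δ ^ 2)]
  have hsub : ∑ i : Fin n, ∑ j : Fin n, (if (i : ℕ) = j + 1 then σ ^ 2 else 0) =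
      (n - 1) * σ ^ 2 := by
    rw [Finset.sum_comm]
    simp only [Fin.sum_ite_val_eq (fun _ => σ ^ 2)]
    exact Fin.sum_ite_succ_lt hn _
  have hsuper : ∑ i : Fin n, ∑ j : Fin n, (if (j : ℕ) = i + 1 then τ ^ 2 else 0) =
      (n - 1) * τ ^ 2 := by
    simp only [Fin.sum_ite_val_eq (fun _ => τ ^ 2)]
    exact Fin.sum_ite_succ_lt hn _
  simp only [frobSq, hentry, Finset.sum_add_distrib, hdiag, hsub, hsuper]
  ring

/-- The values `s 0 = s (n + 1) = 0` stand in for the entries cut off in the first and last rows. -/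
lemma triToeplitz_mulVec_apply (σ δ τ : ℝ) (s : ℕ → ℝ) (h0 : s 0 = 0) (hn : s (n + 1) = 0)
    (k : Fin n) :
    (triToeplitz n σ δ τ *ᵥ fun i => s (i + 1)) k = σ * s k + δ * s (k + 1) + τ * s (k + 2) := by
  have hentry : ∀ i : Fin n, triToeplitz n σ δ τ k i * s (i + 1) =
      (if (i : ℕ) = k then δ * s (k + 1) else 0) + (if (i : ℕ) + 1 = k then σ * s k else 0) +
        (if (i : ℕ) = k + 1 then τ * s (k + 2) else 0) := by
    intro i
    rw [triToeplitz_apply]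
    split_ifs <;> try simp only [add_zero, zero_add, zero_mul]
    all_goals first | omega | (congr 2 <;> omega)
  have hk := k.isLt
  have hdiag := Fin.sum_ite_val_eq (n := n) (fun _ => δ * s (k + 1)) k
  have hsuper := Fin.sum_ite_val_eq (n := n) (fun _ => τ * s (k + 2)) (k + 1)
  have hsub : ∑ i : Fin n, (if (i : ℕ) + 1 = k then σ * s k else 0) = σ * s k := by
    rcases Nat.eq_zero_or_eq_succ_pred k with hk0 | hk0
    · rw [hk0, h0, mul_zero]
      exact Finset.sum_eq_zero fun i _ => if_neg (by omega)
    · rw [hk0]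
      simp only [Nat.succ_eq_add_one, Nat.add_right_cancel_iff]
      rw [Fin.sum_ite_val_eq (fun _ => σ * s (k.1.pred + 1)), if_pos (by omega)]
  simp only [mulVec, dotProduct, hentry, Finset.sum_add_distrib, hdiag, hsuper, hsub, if_pos hk]
  split_ifs with hk1
  · ring
  · rw [show (k : ℕ) + 2 = n + 1 by omega, hn]
    ring

lemma triToeplitz_mulVec_sin (c δ θ : ℝ) (hθ : sin ((n + 1) * θ) = 0) :
    triToeplitz n c δ c *ᵥ (fun k : Fin n => sin ((k + 1) * θ)) =
      (δ + 2 * c * cos θ) • fun k : Fin n => sin ((k + 1) * θ) := by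
  funext k
  have := triToeplitz_mulVec_apply c δ c (fun m => sin (m * θ)) (by simp)
    (by push_cast; exact hθ) k
  push_cast at this
  rw [this, Pi.smul_apply, smul_eq_mul]
  have hsub : sin (k * θ) = sin ((k + 1) * θ - θ) := by ring_nf
  have hadd : sin ((k + 2) * θ) = sin ((k + 1) * θ + θ) := by ring_nf
  rw [hsub, hadd, sin_sub, sin_add]
  ring

end TriToeplitz

/-- `θ_j = (j + 1)π/(n + 1)`, with `Fin n` indices shifted by one from the paper's `1, …, n`. -/
noncomputable def tridiagAngle (n : ℕ) (j : Fin n) : ℝ := ((j : ℕ) + 1) * π / ((n : ℝ) + 1)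

section Angles

variable {n : ℕ}

lemma tridiagAngle_mem_Ioo (j : Fin n) : tridiagAngle n j ∈ Set.Ioo 0 π := by
  have hj : ((j : ℕ) : ℝ) + 1 < n + 1 := by exact_mod_cast Nat.add_lt_add_right j.isLt 1
  refine ⟨by unfold tridiagAngle; positivity, ?_⟩
  rw [tridiagAngle, div_lt_iff₀ (by positivity)]
  nlinarith [pi_pos]

lemma sin_succ_mul_tridiagAngle (j : Fin n) : sin ((n + 1) * tridiagAngle n j) = 0 := by
  rw [tridiagAngle, mul_div_cancel₀ _ (by positivity : (n : ℝ) + 1 ≠ 0)]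
  exact_mod_cast sin_nat_mul_pi ((j : ℕ) + 1)

lemma strictAnti_cos_tridiagAngle : StrictAnti fun j : Fin n => cos (tridiagAngle n j) :=
  fun a b hab => cos_lt_cos_of_nonneg_of_le_pi (tridiagAngle_mem_Ioo a).1.le
    (tridiagAngle_mem_Ioo b).2.le (by unfold tridiagAngle; gcongr; exact_mod_cast hab)

lemma cos_tridiagAngle_rev (j : Fin n) : cos (tridiagAngle n j.rev) = -cos (tridiagAngle n j) := by
  have hrev : ((j.rev : ℕ) : ℝ) + 1 = n - j := by
    rw [Fin.val_rev, Nat.cast_sub (by omega)]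
    push_cast
    ring
  rw [tridiagAngle, hrev, tridiagAngle, ← cos_pi_sub]
  congr 1
  field_simp
  ring

end Angles

theorem exists_perm_eigenvalues_triToeplitz {n : ℕ} (c : ℝ)
    (hT : (triToeplitz n c 0 c).IsHermitian) :
    ∃ e : Equiv.Perm (Fin n), ∀ i, hT.eigenvalues (e i) = |2 * c| * cos (tridiagAngle n i) := by
  rcases eq_or_ne c 0 with rfl | hc
  · have hT0 : triToeplitz n 0 0 0 = 0 := by
      ext i j
      simp [triToeplitz_apply]
    refine ⟨1, fun i => ?_⟩
    simp [hT.eigenvalues_eq_zero_iff.mpr hT0]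
  have hmem : ∀ j, 2 * c * cos (tridiagAngle n j) ∈ Set.range hT.eigenvalues := by
    intro j
    refine hT.mem_range_eigenvalues_of_mulVec_eq (v := fun k : Fin n => sin ((k + 1) * _))
      (fun hv => ?_) (by simpa using triToeplitz_mulVec_sin c 0 _ (sin_succ_mul_tridiagAngle j))
    have := congrFun hv ⟨0, j.pos⟩
    simp only [Nat.cast_zero, zero_add, one_mul, Pi.zero_apply] at this
    exact (sin_pos_of_pos_of_lt_pi (tridiagAngle_mem_Ioo j).1 (tridiagAngle_mem_Ioo j).2).ne' this
  refine Function.Injective.exists_perm_comp_eq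
    ((mul_right_injective₀ (by positivity)).comp strictAnti_cos_tridiagAngle.injective) fun j => ?_
  rcases le_or_gt 0 c with hc0 | hc0
  · simpa [abs_of_nonneg (by linarith : 0 ≤ 2 * c)] using hmem j
  · obtain ⟨i, hi⟩ := hmem j.rev
    exact ⟨i, by rw [hi, cos_tridiagAngle_rev, abs_of_neg (by linarith)]; ring⟩

/-- for `T₁* = (n;1;(σ₁+τ₁)/2,0,(σ₁+τ₁)/2)`, the eigenvalues are
`|σ₁+τ₁|·cos(iπ/(n+1))`, and the squared Frobenius distance to the symmetric
positive semidefinite matrices equals `(1/2)‖T₁*‖_F² = ((n−1)/4)(σ₁+τ₁)²`. -/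
theorem zero_diag_symmetric_tridiag_dist {n : ℕ} (hn : 1 ≤ n) (σ₁ τ₁ : ℝ)
    (hT : (triToeplitz n ((σ₁+τ₁)/2) 0 ((σ₁+τ₁)/2)).IsHermitian) :
    (∃ e : Equiv.Perm (Fin n), ∀ i : Fin n,
      hT.eigenvalues (e i) =
        |σ₁ + τ₁| * Real.cos (((i : ℕ) + 1) * Real.pi / ((n : ℝ) + 1))) ∧
    sInf {d : ℝ | ∃ E : Matrix (Fin n) (Fin n) ℝ,
        (triToeplitz n ((σ₁+τ₁)/2) 0 ((σ₁+τ₁)/2) + E).PosSemidef ∧ d = frobSq E} =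
      (((n : ℝ) - 1)/4) * (σ₁ + τ₁)^2 ∧
    (1/2 : ℝ) * frobSq (triToeplitz n ((σ₁+τ₁)/2) 0 ((σ₁+τ₁)/2)) =
      (((n : ℝ) - 1)/4) * (σ₁ + τ₁)^2 := by
  have hhalf : (1 / 2 : ℝ) * frobSq (triToeplitz n ((σ₁ + τ₁) / 2) 0 ((σ₁ + τ₁) / 2)) =
      ((n : ℝ) - 1) / 4 * (σ₁ + τ₁) ^ 2 := by
    rw [frobSq_triToeplitz hn]
    ring
  obtain ⟨e, he⟩ := exists_perm_eigenvalues_triToeplitz ((σ₁ + τ₁) / 2) hT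
  rw [show 2 * ((σ₁ + τ₁) / 2) = σ₁ + τ₁ by ring] at he
  have hneg : ∑ i, (hT.eigenvalues i)⁻ ^ 2 = 1 / 2 * ∑ i, hT.eigenvalues i ^ 2 := by
    rw [← Equiv.sum_comp e, ← Equiv.sum_comp e (fun i => hT.eigenvalues i ^ 2)]
    simp only [he]
    exact sum_negPart_sq_eq_half_sum_sq _ Fin.revPerm fun j => by
      rw [Fin.revPerm_apply, cos_tridiagAngle_rev, mul_neg]
  refine ⟨⟨e, he⟩, ?_, hhalf⟩
  rw [hT.isLeast_frobSq_posSemidef_add.csInf_eq, hneg, ← hT.frobSq_eq_sum_eigenvalues_sq, hhalf]
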